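/- Let d ≥ 1, let σ be a permutation of {1,…,d}, let U be a d×d complex unitary matrix, set m = d(d−1)/2, and let μ_1,…,μ_m be complex numbers with |μ_i| = 1 for all i and μ_1 μ_2 ⋯ μ_m = det(U). Then there exist unitary matrices A_1,…,A_m with U = A_1 ⋯ A_m such that each A_i agrees with the d×d identity matrix in every entry outside the 2×2 principal submatrix with row and column indices σ(k_i) and σ(k_i + 1) for some k_i ∈ {1,…,d−1}, and det(A_i) = μ_i for every i = 1,…,m. -/

import Mathlib

/-!
Givens elimination. The columns `σ 0, σ 1, …` are cleared in turn: column `σ j` is brought to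
its pivot by rotations on the adjacent pairs `σ k, σ (k + 1)`, `k = d - 2, …, j`. A `2 × 2`
unitary taking `(x, y)` to `(r, 0)` with `r ≥ 0` is only determined up to the phase of its
second column, so its determinant can be prescribed anywhere on the unit circle. The last
rotation leaves a nonnegative pivot, and unitarity then forces the cleared column to be a basis
vector. After `(d - 1) + ⋯ + 1 = d (d - 1) / 2` rotations with determinants `μ 0, μ 1, …` what
is left is a unitary fixing all basis vectors but one, of determinant `det U / ∏ μ i = 1`:
the identity.
-/

/-- `A` agrees with the identity matrix in every entry outside the 2×2 principal
submatrix with row and column indices `p` and `q` (a "two-level" pattern). -/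
def IsTwoLevelOn {ι R : Type*} [DecidableEq ι] [Zero R] [One R]
    (A : Matrix ι ι R) (p q : ι) : Prop :=
  ∀ i j, (i ≠ p ∧ i ≠ q) ∨ (j ≠ p ∧ j ≠ q) → A i j = if i = j then 1 else 0

open Matrix
open scoped ComplexOrder ComplexConjugate

theorem List.exists_eq_ofFn_of_forall₂ {α β : Type*} {R : α → β → Prop} {n : ℕ}
    {f : Fin n → β} {l : List α} (h : l.Forall₂ R (List.ofFn f)) :
    ∃ g : Fin n → α, l = List.ofFn g ∧ ∀ i, R (g i) (f i) := by
  have hlen : l.length = n := by simpa using h.length_eq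
  subst hlen
  exact ⟨fun i => l[i], List.ofFn_getElem.symm, fun i => by simpa using h.get i.2 (by simp)⟩

namespace IsTwoLevelOn

variable {ι R : Type*} [DecidableEq ι] {A W : Matrix ι ι R} {p q r : ι}

theorem conjTranspose [NonAssocSemiring R] [StarRing R] (h : IsTwoLevelOn A p q) :
    IsTwoLevelOn Aᴴ p q := by
  intro i j hij
  rw [conjTranspose_apply, h j i hij.symm]
  rcases eq_or_ne i j with rfl | hne
  · simp
  · simp [hne, hne.symm]

variable [Fintype ι] [NonAssocSemiring R]

theorem mul_apply_of_ne (h : IsTwoLevelOn A p q) (hp : r ≠ p) (hq : r ≠ q) (s : ι) :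
    (A * W) r s = W r s := by
  rw [mul_apply, Fintype.sum_eq_single r fun t ht => by
    rw [h r t (.inl ⟨hp, hq⟩), if_neg (Ne.symm ht), zero_mul]]
  rw [h r r (.inl ⟨hp, hq⟩), if_pos rfl, one_mul]

theorem mul_apply_of_eq (h : IsTwoLevelOn A p q) (hpq : p ≠ q) (hr : r = p ∨ r = q) (s : ι) :
    (A * W) r s = A r p * W p s + A r q * W q s := by
  refine mul_apply.trans (Fintype.sum_eq_add p q hpq fun t ht => ?_)
  rw [h r t (.inr ht), if_neg (by rintro rfl; tauto), zero_mul]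

theorem mul_apply_of_apply_eq_zero (h : IsTwoLevelOn A p q) (hpq : p ≠ q) {s : ι}
    (hps : W p s = 0) (hqs : W q s = 0) (r : ι) : (A * W) r s = W r s := by
  by_cases hr : r = p ∨ r = q
  · rw [h.mul_apply_of_eq hpq hr, hps, hqs]
    rcases hr with rfl | rfl <;> simp [hps, hqs]
  · push Not at hr
    exact h.mul_apply_of_ne hr.1 hr.2 s

end IsTwoLevelOn

namespace Matrix

section TwoLevel

variable {ι R : Type*} [DecidableEq ι] {p q : ι} (hpq : p ≠ q)

def finTwoEquivPair : Fin 2 ≃ {i // i = p ∨ i = q} where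
  toFun a := ⟨![p, q] a, by fin_cases a <;> simp⟩
  invFun i := if i.1 = p then 0 else 1
  left_inv a := by fin_cases a <;> simp [hpq.symm]
  right_inv i := by rcases i with ⟨i, rfl | rfl⟩ <;> simp [hpq.symm]

def twoLevelEquiv : Fin 2 ⊕ {i // ¬(i = p ∨ i = q)} ≃ ι :=
  (Equiv.sumCongr (finTwoEquivPair hpq) (Equiv.refl _)).trans (Equiv.sumCompl _)

def twoLevel [Zero R] [One R] (B : Matrix (Fin 2) (Fin 2) R) : Matrix ι ι R :=
  reindex (twoLevelEquiv hpq) (twoLevelEquiv hpq) (fromBlocks B 0 0 1)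

section ZeroOne

variable [Zero R] [One R] (B : Matrix (Fin 2) (Fin 2) R)

theorem twoLevel_apply_twoLevelEquiv (x y : Fin 2 ⊕ {i // ¬(i = p ∨ i = q)}) :
    twoLevel hpq B (twoLevelEquiv hpq x) (twoLevelEquiv hpq y) = fromBlocks B 0 0 1 x y := by
  simp [twoLevel]

theorem twoLevel_apply_vecCons (a b : Fin 2) :
    twoLevel hpq B (![p, q] a) (![p, q] b) = B a b :=
  twoLevel_apply_twoLevelEquiv hpq B (.inl a) (.inl b)

theorem isTwoLevelOn_twoLevel : IsTwoLevelOn (twoLevel hpq B) p q := by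
  intro i j hij
  obtain ⟨x, rfl⟩ := (twoLevelEquiv hpq).surjective i
  obtain ⟨y, rfl⟩ := (twoLevelEquiv hpq).surjective j
  simp only [twoLevel_apply_twoLevelEquiv, (twoLevelEquiv hpq).injective.eq_iff]
  rcases x with a | x <;> rcases y with b | y
  · have ha := (finTwoEquivPair hpq a).2
    have hb := (finTwoEquivPair hpq b).2
    simp only [twoLevelEquiv, Equiv.trans_apply, Equiv.sumCongr_apply, Sum.map_inl,
      Equiv.sumCompl_apply_inl] at hij
    tauto
  all_goals simp [one_apply]

theorem twoLevel_one : twoLevel hpq (1 : Matrix (Fin 2) (Fin 2) R) = 1 := by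
  simp [twoLevel, fromBlocks_one]

end ZeroOne

theorem twoLevel_mul [Fintype ι] [NonAssocSemiring R] (B C : Matrix (Fin 2) (Fin 2) R) :
    twoLevel hpq B * twoLevel hpq C = twoLevel hpq (B * C) := by
  simp only [twoLevel, reindex_apply, submatrix_mul_equiv, fromBlocks_multiply]
  simp

theorem conjTranspose_twoLevel [NonAssocSemiring R] [StarRing R]
    (B : Matrix (Fin 2) (Fin 2) R) : (twoLevel hpq B)ᴴ = twoLevel hpq Bᴴ := by
  simp [twoLevel, fromBlocks_conjTranspose]

theorem det_twoLevel [Fintype ι] [CommRing R] (B : Matrix (Fin 2) (Fin 2) R) :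
    (twoLevel hpq B).det = B.det := by
  simp [twoLevel]

theorem twoLevel_mem_unitaryGroup [Fintype ι] [CommRing R] [StarRing R]
    {B : Matrix (Fin 2) (Fin 2) R} (hB : B ∈ unitaryGroup (Fin 2) R) :
    twoLevel hpq B ∈ unitaryGroup ι R := by
  rw [mem_unitaryGroup_iff', star_eq_conjTranspose, conjTranspose_twoLevel, twoLevel_mul,
    ← star_eq_conjTranspose, mem_unitaryGroup_iff'.mp hB, twoLevel_one]

end TwoLevel

section Givens

variable {𝕜 : Type*} [RCLike 𝕜]

def givens (u v ν : 𝕜) : Matrix (Fin 2) (Fin 2) 𝕜 :=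
  !![u, -(ν * conj v); v, ν * conj u]

variable {u v ν : 𝕜}

theorem det_givens (h : conj u * u + conj v * v = 1) : (givens u v ν).det = ν := by
  rw [givens, det_fin_two_of]
  linear_combination ν * h

theorem givens_mem_unitaryGroup (h : conj u * u + conj v * v = 1) (hν : conj ν * ν = 1) :
    givens u v ν ∈ unitaryGroup (Fin 2) 𝕜 := by
  rw [mem_unitaryGroup_iff']
  ext i j
  fin_cases i <;> fin_cases j <;> simp [givens, mul_apply, Fin.sum_univ_two]
  · linear_combination h
  · ring
  · ring
  · linear_combination (v * conj v + u * conj u) * hν + h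

theorem exists_nonneg_mul_unit_vector (x y : 𝕜) :
    ∃ u v : 𝕜, conj u * u + conj v * v = 1 ∧ ∃ r : ℝ, 0 ≤ r ∧ x = r * u ∧ y = r * v := by
  by_cases h0 : x = 0 ∧ y = 0
  · exact ⟨1, 0, by simp, 0, le_rfl, by simp [h0.1], by simp [h0.2]⟩
  have hpos : 0 < ‖x‖ ^ 2 + ‖y‖ ^ 2 := by
    rcases not_and_or.mp h0 with h | h
    · have := norm_pos_iff.mpr h; positivity
    · have := norm_pos_iff.mpr h; positivity
  set r := √(‖x‖ ^ 2 + ‖y‖ ^ 2)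
  have hr : (r : 𝕜) ≠ 0 := RCLike.ofReal_ne_zero.mpr (Real.sqrt_ne_zero'.mpr hpos)
  have hr2 : (r : 𝕜) ^ 2 = (‖x‖ : 𝕜) ^ 2 + (‖y‖ : 𝕜) ^ 2 := by
    rw [← RCLike.ofReal_pow, Real.sq_sqrt hpos.le]
    push_cast
    ring
  refine ⟨x / r, y / r, ?_, r, Real.sqrt_nonneg _, by field_simp, by field_simp⟩
  simp only [map_div₀, RCLike.conj_ofReal]
  field_simp
  linear_combination RCLike.conj_mul x + RCLike.conj_mul y - hr2

theorem exists_unitary_det_eq_conjTranspose_mulVec (x y ν : 𝕜) (hν : ‖ν‖ = 1) :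
    ∃ G ∈ unitaryGroup (Fin 2) 𝕜,
      G.det = ν ∧ 0 ≤ (Gᴴ *ᵥ ![x, y]) 0 ∧ (Gᴴ *ᵥ ![x, y]) 1 = 0 := by
  obtain ⟨u, v, huv, r, hr, rfl, rfl⟩ := exists_nonneg_mul_unit_vector x y
  have hν' : conj ν * ν = 1 := by simp [RCLike.conj_mul, hν]
  refine ⟨givens u v ν, givens_mem_unitaryGroup huv hν', det_givens huv, ?_, ?_⟩
  · have : ((givens u v ν)ᴴ *ᵥ ![(r : 𝕜) * u, r * v]) 0 = r := by
      simp [givens, mulVec, dotProduct, Fin.sum_univ_two]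
      linear_combination (r : 𝕜) * huv
    rw [this]
    exact RCLike.ofReal_nonneg.mpr hr
  · simp [givens, mulVec, dotProduct, Fin.sum_univ_two]
    ring

end Givens

section Unitary

variable {ι R : Type*} [Fintype ι] [DecidableEq ι] [CommRing R] [StarRing R]
  {W : Matrix ι ι R}

theorem apply_eq_zero_of_col_eq_one_col (hW : W ∈ unitaryGroup ι R) {a : ι}
    (ha : ∀ r, W r a = (1 : Matrix ι ι R) r a) {b : ι} (hb : b ≠ a) : W a b = 0 := by
  have h := congrFun₂ (mem_unitaryGroup_iff'.mp hW) a b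
  rwa [star_eq_conjTranspose, mul_apply, Fintype.sum_eq_single a fun r hr => by simp [ha r, hr],
    conjTranspose_apply, ha a, one_apply_eq, star_one, one_mul, one_apply_ne hb.symm] at h

end Unitary

section RCLike

variable {ι 𝕜 : Type*} [Fintype ι] [DecidableEq ι] [RCLike 𝕜]

theorem col_eq_one_col_of_nonneg {W : Matrix ι ι 𝕜} (hW : W ∈ unitaryGroup ι 𝕜) {c : ι}
    (hc : ∀ r ≠ c, W r c = 0) (hpos : 0 ≤ W c c) (r : ι) :
    W r c = (1 : Matrix ι ι 𝕜) r c := by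
  rcases eq_or_ne r c with rfl | hr
  · obtain ⟨x, hx, hxc⟩ := RCLike.nonneg_iff_exists_ofReal.mp hpos
    have h := congrFun₂ (mem_unitaryGroup_iff'.mp hW) r r
    rw [star_eq_conjTranspose, mul_apply, Fintype.sum_eq_single r fun s hs => by simp [hc s hs],
      conjTranspose_apply, ← hxc, RCLike.star_def, RCLike.conj_ofReal, ← RCLike.ofReal_mul,
      one_apply_eq, ← RCLike.ofReal_one, RCLike.ofReal_inj] at h
    rw [← hxc, one_apply_eq, ← RCLike.ofReal_one, RCLike.ofReal_inj]
    nlinarith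
  · rw [hc r hr, one_apply_ne hr]

theorem exists_twoLevel_det_eq_conjTranspose_mul {p q : ι} (hpq : p ≠ q) (W : Matrix ι ι 𝕜)
    (c : ι) {ν : 𝕜} (hν : ‖ν‖ = 1) :
    ∃ A ∈ unitaryGroup ι 𝕜, IsTwoLevelOn A p q ∧ A.det = ν ∧
      (Aᴴ * W) q c = 0 ∧ 0 ≤ (Aᴴ * W) p c := by
  obtain ⟨G, hG, hdet, hpos, hzero⟩ :=
    exists_unitary_det_eq_conjTranspose_mulVec (W p c) (W q c) ν hν
  have hA := (isTwoLevelOn_twoLevel hpq G).conjTranspose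
  have key (a : Fin 2) :
      ((twoLevel hpq G)ᴴ * W) (![p, q] a) c = (Gᴴ *ᵥ ![W p c, W q c]) a := by
    rw [hA.mul_apply_of_eq hpq (by fin_cases a <;> simp), conjTranspose_twoLevel]
    have h0 := twoLevel_apply_vecCons hpq Gᴴ a 0
    have h1 := twoLevel_apply_vecCons hpq Gᴴ a 1
    simp only [cons_val_zero, cons_val_one] at h0 h1
    simp [h0, h1, mulVec, dotProduct, Fin.sum_univ_two]
  refine ⟨twoLevel hpq G, twoLevel_mem_unitaryGroup hpq hG, isTwoLevelOn_twoLevel hpq G,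
    (det_twoLevel hpq G).trans hdet, ?_, ?_⟩
  · simpa using (key 1).trans hzero
  · simpa using (key 0).symm ▸ hpos

variable {d : ℕ} (σ : Fin d ≃ ι)

def IsPUnitaryWithDet (A : Matrix ι ι 𝕜) (z : 𝕜) : Prop :=
  A ∈ unitaryGroup ι 𝕜 ∧
    (∃ (k : ℕ) (hk : k + 1 < d), IsTwoLevelOn A (σ ⟨k, k.lt_of_succ_lt hk⟩) (σ ⟨k + 1, hk⟩)) ∧
    A.det = z

theorem det_list_prod_of_forall₂ {L : List (Matrix ι ι 𝕜)} {μs : List 𝕜}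
    (h : L.Forall₂ (IsPUnitaryWithDet σ) μs) : L.prod.det = μs.prod := by
  induction h with
  | nil => simp
  | cons hA _ ih => rw [List.prod_cons, det_mul, hA.2.2, ih, List.prod_cons]

theorem exists_clear_column_below (c : ι) (j : ℕ) (νs : List 𝕜) (hνs : ∀ z ∈ νs, ‖z‖ = 1)
    (W : Matrix ι ι 𝕜) (hW : W ∈ unitaryGroup ι 𝕜) (hlen : j + νs.length < d)
    (hzero : ∀ i : Fin d, j + νs.length < i → W (σ i) c = 0) :
    ∃ (L : List (Matrix ι ι 𝕜)) (W' : Matrix ι ι 𝕜),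
      L.Forall₂ (IsPUnitaryWithDet σ) νs ∧ W = L.prod * W' ∧ W' ∈ unitaryGroup ι 𝕜 ∧
      (∀ i : Fin d, j < i → W' (σ i) c = 0) ∧
      ∀ s, (∀ i : Fin d, j ≤ i → W (σ i) s = 0) → ∀ r, W' r s = W r s := by
  induction νs generalizing W with
  | nil => exact ⟨[], W, .nil, by simp, hW, by simpa using hzero, fun _ _ _ => rfl⟩
  | cons ν νs ih =>
    simp only [List.length_cons] at hlen hzero
    set k := j + νs.length
    have hpq : σ ⟨k, by omega⟩ ≠ σ ⟨k + 1, by omega⟩ := σ.injective.ne (by simp)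
    obtain ⟨A, hA, htl, hdet, hq, -⟩ :=
      exists_twoLevel_det_eq_conjTranspose_mul hpq W c (hνs ν List.mem_cons_self)
    have hrow (i : Fin d) (hk : (i : ℕ) ≠ k) (hk' : (i : ℕ) ≠ k + 1) (s : ι) :
        (Aᴴ * W) (σ i) s = W (σ i) s :=
      htl.conjTranspose.mul_apply_of_ne (σ.injective.ne (by simp [Fin.ext_iff, hk]))
        (σ.injective.ne (by simp [Fin.ext_iff, hk'])) s
    obtain ⟨L, W', hL, hprod, hW', hz, hpres⟩ :=
      ih (fun z hz => hνs z (List.mem_cons_of_mem ν hz)) (Aᴴ * W)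
        (mul_mem (Unitary.star_mem hA) hW) (by omega) fun i hi => by
          rcases eq_or_ne (i : ℕ) (k + 1) with hi' | hi'
          · rwa [show i = ⟨k + 1, by omega⟩ from Fin.ext hi']
          · rw [hrow i (by omega) hi']
            exact hzero i (by omega)
    refine ⟨A :: L, W', .cons ⟨hA, ⟨k, by omega, htl⟩, hdet⟩ hL, ?_, hW', hz, fun s hs r => ?_⟩
    · rw [List.prod_cons, mul_assoc, ← hprod, ← mul_assoc, ← star_eq_conjTranspose,
        mem_unitaryGroup_iff.mp hA, one_mul]
    · have hcol := htl.conjTranspose.mul_apply_of_apply_eq_zero hpq (W := W)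
        (hs _ (by simp; omega)) (hs _ (by simp; omega))
      rw [hpres s (fun i hi => by rw [hcol]; exact hs i (by omega)), hcol]

theorem exists_clear_column (j : ℕ) (νs : List 𝕜) (ν : 𝕜) (hlen : j + νs.length + 2 = d)
    (hν : ∀ z ∈ νs ++ [ν], ‖z‖ = 1) (W : Matrix ι ι 𝕜) (hW : W ∈ unitaryGroup ι 𝕜)
    (hcol : ∀ i : Fin d, (i : ℕ) < j → ∀ r, W r (σ i) = (1 : Matrix ι ι 𝕜) r (σ i)) :
    ∃ (L : List (Matrix ι ι 𝕜)) (W' : Matrix ι ι 𝕜),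
      L.Forall₂ (IsPUnitaryWithDet σ) (νs ++ [ν]) ∧ W = L.prod * W' ∧
      W' ∈ unitaryGroup ι 𝕜 ∧
      ∀ i : Fin d, (i : ℕ) ≤ j → ∀ r, W' r (σ i) = (1 : Matrix ι ι 𝕜) r (σ i) := by
  set c := σ ⟨j, by omega⟩
  obtain ⟨L, W₁, hL, hprod, hW₁, hz, hpres⟩ :=
    exists_clear_column_below σ c (j + 1) νs (fun z hz => hν z (by simp [hz])) W hW (by omega)
      fun i hi => absurd i.2 (by omega)
  have hpq : c ≠ σ ⟨j + 1, by omega⟩ := σ.injective.ne (by simp)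
  obtain ⟨A, hA, htl, hdet, hq, hpos⟩ :=
    exists_twoLevel_det_eq_conjTranspose_mul hpq W₁ c (hν ν (by simp))
  have hW₂ : Aᴴ * W₁ ∈ unitaryGroup ι 𝕜 := mul_mem (Unitary.star_mem hA) hW₁
  have hold (i : Fin d) (hi : (i : ℕ) < j) (r : ι) :
      (Aᴴ * W₁) r (σ i) = (1 : Matrix ι ι 𝕜) r (σ i) := by
    have hzero (i' : Fin d) (hi' : (i' : ℕ) ≠ i) : W (σ i') (σ i) = 0 := by
      rw [hcol i hi, one_apply_ne (σ.injective.ne (Fin.ne_of_val_ne hi'))]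
    have h₁ := hpres (σ i) fun i' hi' => hzero i' (by omega)
    rw [htl.conjTranspose.mul_apply_of_apply_eq_zero hpq
      (by rw [h₁]; exact hzero _ (by simp; omega)) (by rw [h₁]; exact hzero _ (by simp; omega)),
      h₁, hcol i hi]
  have hnew : ∀ r, (Aᴴ * W₁) r c = (1 : Matrix ι ι 𝕜) r c := by
    refine col_eq_one_col_of_nonneg hW₂ (fun r hr => ?_) hpos
    obtain ⟨i, rfl⟩ := σ.surjective r
    have hij : (i : ℕ) ≠ j := fun h => hr (congrArg σ (Fin.ext h))
    rcases lt_or_gt_of_ne hij with hi | hi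
    · exact apply_eq_zero_of_col_eq_one_col hW₂ (hold i hi)
        (σ.injective.ne (by simp [Fin.ext_iff]; omega))
    · rcases eq_or_ne (i : ℕ) (j + 1) with hi' | hi'
      · rwa [show i = ⟨j + 1, by omega⟩ from Fin.ext hi']
      · rw [htl.conjTranspose.mul_apply_of_ne (σ.injective.ne (by simp [Fin.ext_iff]; omega))
          (σ.injective.ne (by simp [Fin.ext_iff]; omega))]
        exact hz i (by omega)
  refine ⟨L ++ [A], Aᴴ * W₁, List.rel_append hL (.cons ⟨hA, ⟨j, by omega, htl⟩, hdet⟩ .nil),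
    ?_, hW₂, fun i hi => ?_⟩
  · rw [hprod, List.prod_append, List.prod_singleton, mul_assoc, ← mul_assoc A,
      ← star_eq_conjTranspose, mem_unitaryGroup_iff.mp hA, one_mul]
  · rcases lt_or_eq_of_le hi with hi | hi
    · exact hold i hi
    · rw [show i = ⟨j, by omega⟩ from Fin.ext hi]
      exact hnew

theorem eq_one_of_det_eq_one_of_col_eq_one_col {W : Matrix ι ι 𝕜}
    (hW : W ∈ unitaryGroup ι 𝕜) (hdet : W.det = 1)
    (hcol : ∀ i : Fin d, (i : ℕ) + 1 < d → ∀ r, W r (σ i) = (1 : Matrix ι ι 𝕜) r (σ i)) :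
    W = 1 := by
  rcases d with _ | n
  · ext r
    exact (σ.symm r).elim0
  set c := σ (Fin.last n)
  have hstd (s : ι) (hs : s ≠ c) (r : ι) : W r s = (1 : Matrix ι ι 𝕜) r s := by
    obtain ⟨i, rfl⟩ := σ.surjective s
    have := Fin.val_lt_last (σ.injective.ne_iff.mp hs)
    exact hcol i (by omega) r
  have hoff (r s : ι) (hrs : r ≠ s) : W r s = 0 := by
    rcases eq_or_ne s c with rfl | hs
    · exact apply_eq_zero_of_col_eq_one_col hW (hstd r hrs) hrs.symm
    · rw [hstd s hs, one_apply_ne hrs]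
  have hcc : W c c = 1 := by
    have hdiag : W.IsDiag := fun r s hrs => hoff r s hrs
    rw [← hdet]
    conv_rhs => rw [← hdiag.diagonal_diag]
    rw [det_diagonal, Finset.prod_eq_single c (fun r _ hr => by simpa using hstd r hr r)
      (by simp)]
    rfl
  ext r s
  by_cases hs : s = c
  · rw [hs]
    rcases eq_or_ne r c with rfl | hrc
    · rw [hcc, one_apply_eq]
    · rw [hoff r c hrc, one_apply_ne hrc]
  · exact hstd s hs r

theorem exists_forall₂_isPUnitaryWithDet_prod_eq (n : ℕ) (hn : n ≤ d) (W : Matrix ι ι 𝕜)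
    (hW : W ∈ unitaryGroup ι 𝕜) (μs : List 𝕜) (hμs : ∀ z ∈ μs, ‖z‖ = 1)
    (hlen : μs.length = n.choose 2) (hdet : μs.prod = W.det)
    (hcol : ∀ i : Fin d, (i : ℕ) + n < d → ∀ r, W r (σ i) = (1 : Matrix ι ι 𝕜) r (σ i)) :
    ∃ L : List (Matrix ι ι 𝕜), L.Forall₂ (IsPUnitaryWithDet σ) μs ∧ W = L.prod := by
  induction n generalizing W μs with
  | zero =>
    obtain rfl : μs = [] := List.length_eq_zero_iff.mp hlen
    exact ⟨[], .nil, eq_one_of_det_eq_one_of_col_eq_one_col σ hW hdet.symm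
      fun i hi => hcol i (by omega)⟩
  | succ n ih =>
    rcases n with _ | n
    · obtain rfl : μs = [] := List.length_eq_zero_iff.mp hlen
      exact ⟨[], .nil, eq_one_of_det_eq_one_of_col_eq_one_col σ hW hdet.symm hcol⟩
    obtain ⟨νs, ν, rest, rfl, hνs, hrest⟩ : ∃ νs ν rest,
        μs = (νs ++ [ν]) ++ rest ∧ νs.length = n ∧ rest.length = (n + 1).choose 2 := by
      have hchoose : (n + 1 + 1).choose 2 = (n + 1).choose 2 + (n + 1) := by
        rw [Nat.choose_succ_succ, Nat.choose_one_right, add_comm]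
      refine ⟨μs.take n, μs[n]'(by omega), μs.drop (n + 1), ?_, by simp; omega, by simp; omega⟩
      rw [List.append_assoc, List.singleton_append, List.getElem_cons_drop, List.take_append_drop]
    obtain ⟨L₁, W₁, hL₁, hprod₁, hW₁, hcol₁⟩ :=
      exists_clear_column σ (d - (n + 2)) νs ν (by omega)
        (fun z hz => hμs z (List.mem_append_left _ hz)) W hW fun i hi => hcol i (by omega)
    have hdet₁ : rest.prod = W₁.det := by
      have h₀ : (νs ++ [ν]).prod ≠ 0 :=
        List.prod_ne_zero fun h₀ => by simpa using hμs 0 (List.mem_append_left _ h₀)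
      apply mul_left_cancel₀ h₀
      rw [← List.prod_append, hdet, hprod₁, det_mul, det_list_prod_of_forall₂ σ hL₁]
    obtain ⟨L₂, hL₂, hprod₂⟩ := ih (by omega) W₁ hW₁ rest
      (fun z hz => hμs z (List.mem_append_right _ hz)) hrest hdet₁
      fun i hi => hcol₁ i (by omega)
    exact ⟨L₁ ++ L₂, List.rel_append hL₁ hL₂, by rw [List.prod_append, hprod₁, hprod₂]⟩

end RCLike

end Matrix

theorem unitary_eq_prod_P_unitary_prescribed_det (d : ℕ)
    (σ : Equiv.Perm (Fin d))
    (U : Matrix (Fin d) (Fin d) ℂ) (hU : U ∈ Matrix.unitaryGroup (Fin d) ℂ)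
    (μ : Fin (d * (d - 1) / 2) → ℂ) (hμ : ∀ i, ‖μ i‖ = 1)
    (hprod : ∏ i, μ i = U.det) :
    ∃ A : Fin (d * (d - 1) / 2) → Matrix (Fin d) (Fin d) ℂ,
      U = (List.ofFn A).prod ∧
      ∀ i, A i ∈ Matrix.unitaryGroup (Fin d) ℂ ∧
        (∃ (k : ℕ) (hk : k + 1 < d),
          IsTwoLevelOn (A i) (σ ⟨k, by omega⟩) (σ ⟨k + 1, hk⟩)) ∧
        (A i).det = μ i := by
  obtain ⟨L, hL, rfl⟩ := exists_forall₂_isPUnitaryWithDet_prod_eq σ d le_rfl U hU (List.ofFn μ)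
    (by simpa using hμ) (by simp [Nat.choose_two_right]) (by simpa [List.prod_ofFn] using hprod)
    fun i hi => absurd hi (by omega)
  obtain ⟨A, rfl, hA⟩ := List.exists_eq_ofFn_of_forall₂ hL
  exact ⟨A, rfl, hA⟩
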